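/- arXiv:1308.0724 — 6 statements merged into one kernel-verified Lean document; each statement's English description precedes it below -/
import Mathlib

section
/- Let a = {a_k} satisfy a_0 = 1, a_k ≥ 0 for all k, and a_{k-1} ≥ a_k for all k ≥ 1. Let u be the fundamental sequence satisfying u_0 = 1 and ∑_{j=0}^{k} a_j u_{k-j} = 1 for all k ≥ 0. Then 0 ≤ u_k ≤ 1 for all k ≥ 0. -/
open Finset

theorem stmt_3 (a u : ℕ → ℝ) (ha0 : a 0 = 1)
    (hapos : ∀ k, 0 ≤ a k)
    (hamono : ∀ k, 1 ≤ k → a k ≤ a (k - 1))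
    (hu0 : u 0 = 1)
    (hu : ∀ k, ∑ j ∈ Finset.range (k + 1), a j * u (k - j) = 1) :
    ∀ k, 0 ≤ u k ∧ u k ≤ 1 := by
  intro k
  induction k using Nat.strong_induction_on with
  | _ k ih =>
    match k with
    | 0 => simp [hu0]
    | Nat.succ n =>
      have h1 := hu (n + 1)
      rw [Finset.sum_range_succ'] at h1
      simp only [Nat.succ_sub_succ, Nat.sub_zero, ha0, one_mul] at h1
      have h2 := hu n
      have key : u (n + 1) = ∑ j ∈ Finset.range (n + 1), (a j - a (j + 1)) * u (n - j) := by
        simp only [sub_mul, Finset.sum_sub_distrib, h2]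
        linarith
      have hterm : ∀ j ∈ Finset.range (n + 1), 0 ≤ (a j - a (j + 1)) * u (n - j) := by
        intro j _
        have hd : a (j + 1) ≤ a j := by simpa using hamono (j + 1) (by omega)
        exact mul_nonneg (by linarith) ((ih (n - j) (by omega)).1)
      constructor
      · rw [key]
        exact Finset.sum_nonneg hterm
      · rw [key]
        have hle : ∑ j ∈ Finset.range (n + 1), (a j - a (j + 1)) * u (n - j)
            ≤ ∑ j ∈ Finset.range (n + 1), (a j - a (j + 1)) := by
          apply Finset.sum_le_sum
          intro j hj
          have hd : a (j + 1) ≤ a j := by simpa using hamono (j + 1) (by omega)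
          calc (a j - a (j + 1)) * u (n - j) ≤ (a j - a (j + 1)) * 1 :=
                mul_le_mul_of_nonneg_left ((ih (n - j) (by omega)).2) (by linarith)
            _ = a j - a (j + 1) := mul_one _
        have htel : ∑ j ∈ Finset.range (n + 1), (a j - a (j + 1)) = a 0 - a (n + 1) :=
          Finset.sum_range_sub' a (n + 1)
        have := hapos (n + 1)
        rw [htel, ha0] at hle
        linarith
end

section
/- Let a = {a_k} satisfy 1 = a_0 > a_1 ≥ a_2 ≥ ... ≥ 0 with a_k → 0 and ∑_{k=0}^∞ a_k = ∞. Let u be the fundamental sequence satisfying ∑_{j=0}^{k} a_j u_{k-j} = 1 for all k ≥ 0. Then lim_{k→∞} u_k = 0. -/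
/-
Subtracting the convolution identity at `k` from the one at `k + 1` gives the renewal equation
`u (k + 1) = ∑ j ≤ k, (a j - a (j + 1)) * u (k - j)`, whose weights are nonnegative with total
mass at most `1`; hence `0 ≤ u ≤ 1`. Let `L = limsup u`. The weight `1 - a 1` of `u k` is positive,
all later terms are eventually at most about `L` (the far tail has small weight because `a`
converges), so `u (k + 1)` close to `L` forces `u k` close to `L`. Therefore every window
`u (k - m), …, u k` is, for arbitrarily late `k`, above `L / 2`, and the identity
`∑ a j * u (k - j) = 1` yields `(L / 2) * ∑ j ≤ m, a j ≤ 1` for all `m`, so `L = 0` as `∑ a j = ∞`.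
-/

open Finset Filter

theorem sum_Ico_sub_succ (a : ℕ → ℝ) {m n : ℕ} (h : m ≤ n) :
    ∑ j ∈ Ico m n, (a j - a (j + 1)) = a m - a n := by
  rw [← neg_sub (a n), ← sum_Ico_sub a h, ← sum_neg_distrib]
  simp only [neg_sub]

section Renewal

variable {a u : ℕ → ℝ}

theorem succ_eq_sum_of_sum_mul_eq_one (ha0 : a 0 = 1)
    (hu : ∀ k, ∑ j ∈ range (k + 1), a j * u (k - j) = 1) (k : ℕ) :
    u (k + 1) = ∑ j ∈ range (k + 1), (a j - a (j + 1)) * u (k - j) := by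
  have hsucc := hu (k + 1)
  rw [sum_range_succ'] at hsucc
  simp only [Nat.add_sub_add_right, ha0, one_mul, Nat.sub_zero] at hsucc
  simp only [sub_mul, sum_sub_distrib, hu k]
  linarith

theorem mem_Icc_of_sum_mul_eq_one (ha : Antitone a) (hpos : ∀ k, 0 ≤ a k) (ha0 : a 0 = 1)
    (hu : ∀ k, ∑ j ∈ range (k + 1), a j * u (k - j) = 1) (k : ℕ) : u k ∈ Set.Icc 0 1 := by
  induction k using Nat.strong_induction_on with
  | _ k ih =>
    cases k with
    | zero =>
      have hu0 : u 0 = 1 := by simpa [ha0] using hu 0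
      simp [hu0]
    | succ k =>
      have hg : ∀ j, 0 ≤ a j - a (j + 1) := fun j => sub_nonneg.2 (ha j.le_succ)
      have hu' : ∀ j ∈ range (k + 1), u (k - j) ∈ Set.Icc 0 1 := fun j _ => ih _ (by omega)
      rw [succ_eq_sum_of_sum_mul_eq_one ha0 hu]
      constructor
      · exact sum_nonneg fun j hj => mul_nonneg (hg j) (hu' j hj).1
      · calc ∑ j ∈ range (k + 1), (a j - a (j + 1)) * u (k - j)
            ≤ ∑ j ∈ range (k + 1), (a j - a (j + 1)) :=
              sum_le_sum fun j hj => mul_le_of_le_one_right (hg j) (hu' j hj).2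
          _ = a 0 - a (k + 1) := by rw [range_eq_Ico, sum_Ico_sub_succ a (Nat.zero_le _)]
          _ ≤ 1 := by linarith [hpos (k + 1)]

theorem succ_le_of_sum_mul_eq_one (ha : Antitone a) (hpos : ∀ k, 0 ≤ a k) (ha0 : a 0 = 1)
    (hu : ∀ k, ∑ j ∈ range (k + 1), a j * u (k - j) = 1) {B : ℝ} (hB : 0 ≤ B) {J N k : ℕ}
    (hJ : 1 ≤ J) (hk : J + N ≤ k) (hN : ∀ n ≥ N, u n ≤ B) :
    u (k + 1) ≤ (1 - a 1) * u k + a 1 * B + (a J - a (k + 1)) := by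
  have hg : ∀ j, 0 ≤ a j - a (j + 1) := fun j => sub_nonneg.2 (ha j.le_succ)
  have hbnd := mem_Icc_of_sum_mul_eq_one ha hpos ha0 hu
  have head : ∑ j ∈ Ico 0 1, (a j - a (j + 1)) * u (k - j) = (1 - a 1) * u k := by simp [ha0]
  have middle : ∑ j ∈ Ico 1 J, (a j - a (j + 1)) * u (k - j) ≤ a 1 * B := calc
    _ ≤ ∑ j ∈ Ico 1 J, (a j - a (j + 1)) * B :=
        sum_le_sum fun j hj => mul_le_mul_of_nonneg_left (hN _ (by grind)) (hg j)
    _ = (a 1 - a J) * B := by rw [← sum_mul, sum_Ico_sub_succ a hJ]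
    _ ≤ a 1 * B := mul_le_mul_of_nonneg_right (by linarith [hpos J]) hB
  have tail : ∑ j ∈ Ico J (k + 1), (a j - a (j + 1)) * u (k - j) ≤ a J - a (k + 1) := calc
    _ ≤ ∑ j ∈ Ico J (k + 1), (a j - a (j + 1)) :=
        sum_le_sum fun j _ => mul_le_of_le_one_right (hg j) (hbnd _).2
    _ = a J - a (k + 1) := sum_Ico_sub_succ a (by omega)
  rw [succ_eq_sum_of_sum_mul_eq_one ha0 hu, range_eq_Ico,
    ← sum_Ico_consecutive _ (Nat.zero_le J) (by omega : J ≤ k + 1),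
    ← sum_Ico_consecutive _ (Nat.zero_le 1) hJ]
  linarith

theorem exists_near_limsup_of_near_limsup_succ (ha : Antitone a) (hpos : ∀ k, 0 ≤ a k)
    (ha0 : a 0 = 1) (ha1 : a 1 < 1) (hu : ∀ k, ∑ j ∈ range (k + 1), a j * u (k - j) = 1)
    {ε : ℝ} (hε : 0 < ε) :
    ∃ δ > 0, δ ≤ ε ∧
      ∀ᶠ k in atTop, limsup u atTop - δ < u (k + 1) → limsup u atTop - ε < u k := by
  set L := limsup u atTop
  have hbnd := mem_Icc_of_sum_mul_eq_one ha hpos ha0 hu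
  have hub : IsBoundedUnder (· ≤ ·) atTop u := isBoundedUnder_of ⟨1, fun k => (hbnd k).2⟩
  have hL : 0 ≤ L := le_limsup_of_frequently_le (Frequently.of_forall fun k => (hbnd k).1) hub
  have hg0 : 0 < 1 - a 1 := by linarith
  set δ := ε * (1 - a 1) / 3 with hδdef
  have hδ : 0 < δ := by positivity
  refine ⟨δ, hδ, by nlinarith [mul_nonneg hε.le (hpos 1)], ?_⟩
  have hcauchy : CauchySeq a :=
    (tendsto_atTop_ciInf ha ⟨0, Set.forall_mem_range.2 hpos⟩).cauchySeq
  obtain ⟨J, hJ⟩ := Metric.cauchySeq_iff'.1 hcauchy δ hδ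
  obtain ⟨N, hN⟩ := eventually_atTop.1 (eventually_lt_of_limsup_lt (lt_add_of_pos_right L hδ) hub)
  filter_upwards [eventually_ge_atTop (J + 1 + N)] with k hk hlt
  have hstep := succ_le_of_sum_mul_eq_one ha hpos ha0 hu (by linarith) (Nat.le_add_left 1 J) hk
    fun n hn => (hN n hn).le
  have htail : a (J + 1) - a (k + 1) < δ := by
    have := hJ (k + 1) (by omega)
    rw [Real.dist_eq, abs_sub_lt_iff] at this
    linarith [ha (Nat.le_succ J)]
  have : (1 - a 1) * (L - ε) < (1 - a 1) * u k := by
    linarith [mul_lt_of_lt_one_left hδ ha1]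
  exact lt_of_mul_lt_mul_left this hg0.le

end Renewal

theorem frequently_forall_lt_sub {u : ℕ → ℝ} {L : ℝ}
    (hfreq : ∀ ε > 0, ∃ᶠ k in atTop, L - ε < u k)
    (hprop : ∀ ε > 0, ∃ δ > 0, δ ≤ ε ∧ ∀ᶠ k in atTop, L - δ < u (k + 1) → L - ε < u k) (m : ℕ) :
    ∀ ε > 0, ∃ᶠ k in atTop, ∀ j ≤ m, L - ε < u (k - j) := by
  induction m with
  | zero => exact fun ε hε => (hfreq ε hε).mono fun k hk j hj => by simpa [Nat.le_zero.1 hj]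
  | succ m ih =>
    intro ε hε
    obtain ⟨δ, hδ, hδε, hstep⟩ := hprop ε hε
    have hstep' := (tendsto_sub_atTop_nat (m + 1)).eventually hstep
    refine ((ih δ hδ).and_eventually (hstep'.and (eventually_ge_atTop (m + 1)))).mono ?_
    rintro k ⟨hwin, hstep, hk⟩ j hj
    rcases Nat.lt_or_ge j (m + 1) with hjm | hjm
    · linarith [hwin j (by omega)]
    · obtain rfl : j = m + 1 := by omega
      exact hstep (by rw [show k - (m + 1) + 1 = k - m by omega]; exact hwin m le_rfl)

theorem nonpos_of_frequently_forall_lt_sub {a u : ℕ → ℝ} (hpos : ∀ k, 0 ≤ a k)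
    (hdiv : ¬ Summable a) (hu : ∀ k, ∑ j ∈ range (k + 1), a j * u (k - j) = 1)
    (hu0 : ∀ k, 0 ≤ u k) {L : ℝ} (hwin : ∀ m, ∀ ε > 0, ∃ᶠ k in atTop, ∀ j ≤ m, L - ε < u (k - j)) :
    L ≤ 0 := by
  by_contra! hL
  obtain ⟨n, hn⟩ := ((not_summable_iff_tendsto_nat_atTop_of_nonneg hpos).1 hdiv
    |>.eventually_ge_atTop (4 / L)).exists
  obtain ⟨k, hwin, hk⟩ := ((hwin n (L / 2) (by positivity)).and_eventually
    (eventually_ge_atTop n)).exists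
  have : (2 : ℝ) ≤ 1 := calc
    (2 : ℝ) = 4 / L * (L / 2) := by field_simp; norm_num
    _ ≤ ∑ j ∈ range n, a j * (L / 2) := by rw [← sum_mul]; gcongr
    _ ≤ ∑ j ∈ range n, a j * u (k - j) :=
        sum_le_sum fun j hj => mul_le_mul_of_nonneg_left
          (by linarith [hwin j (mem_range.1 hj).le]) (hpos j)
    _ ≤ ∑ j ∈ range (k + 1), a j * u (k - j) :=
        sum_le_sum_of_subset_of_nonneg (range_subset_range.2 (by omega))
          fun j _ _ => mul_nonneg (hpos j) (hu0 _)
    _ = 1 := hu k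
  norm_num at this

theorem stmt_4_general (a u : ℕ → ℝ) (ha0 : a 0 = 1) (ha1 : a 1 < 1)
    (hapos : ∀ k, 0 ≤ a k)
    (hamono : ∀ k, 1 ≤ k → a k ≤ a (k - 1))
    (hadiv : ¬ Summable a)
    (hu : ∀ k, ∑ j ∈ Finset.range (k + 1), a j * u (k - j) = 1) :
    Tendsto u atTop (nhds 0) := by
  have ha : Antitone a := antitone_nat_of_succ_le fun k => hamono (k + 1) (by omega)
  have hbnd := mem_Icc_of_sum_mul_eq_one ha hapos ha0 hu
  have hub : IsBoundedUnder (· ≤ ·) atTop u := isBoundedUnder_of ⟨1, fun k => (hbnd k).2⟩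
  have hcob : IsCoboundedUnder (· ≤ ·) atTop u :=
    (isBoundedUnder_of ⟨0, fun k => (hbnd k).1⟩).isCoboundedUnder_le
  have hlimsup : limsup u atTop ≤ 0 :=
    nonpos_of_frequently_forall_lt_sub hapos hadiv hu (fun k => (hbnd k).1)
      (frequently_forall_lt_sub (fun ε hε => frequently_lt_of_lt_limsup hcob (by linarith))
        fun ε hε => exists_near_limsup_of_near_limsup_succ ha hapos ha0 ha1 hu hε)
  exact tendsto_order.2 ⟨fun c hc => Eventually.of_forall fun k => hc.trans_le (hbnd k).1,
    fun c hc => eventually_lt_of_limsup_lt (hlimsup.trans_lt hc) hub⟩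

theorem stmt_4 (a u : ℕ → ℝ) (ha0 : a 0 = 1) (ha1 : a 1 < 1)
    (hapos : ∀ k, 0 ≤ a k)
    (hamono : ∀ k, 1 ≤ k → a k ≤ a (k - 1))
    (halim : Tendsto a atTop (nhds 0))
    (hadiv : ¬ Summable a)
    (hu : ∀ k, ∑ j ∈ Finset.range (k + 1), a j * u (k - j) = 1) :
    Tendsto u atTop (nhds 0) :=
  stmt_4_general a u ha0 ha1 hapos hamono hadiv hu
end

section
/- Let a = {a_k} satisfy 1 = a_0 > a_1 ≥ a_2 ≥ ... ≥ 0 with a_k → 0 and ∑_{k=0}^∞ a_k = ∞. Let b = {b_k} be the first column of the inverse of the lower triangular Toeplitz matrix generated by a, i.e., b_0 = 1 and ∑_{j=0}^{k} a_j b_{k-j} = 0 for k ≥ 1. Then lim_{k→∞} b_k = 0. -/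
open Finset Filter Topology

/-!
Put `u k = b 0 + ⋯ + b k`. Dividing the generating-function identity `A B = 1` by `1 - x` gives
`∑_{j ≤ k} a j u (k - j) = 1`, and differencing it yields the renewal equation
`u (k + 1) = ∑_{j ≤ k} c j u (k - j)` with weights `c j = a j - a (j + 1) ≥ 0` of total mass
at most `1`; hence `0 ≤ u ≤ 1`.

Let `L = limsup u` and `u (ψ i) → L`. As in the Erdős–Feller–Pollard renewal theorem, the weight
`c 0 = 1 - a 1 > 0` forces `u (ψ i - 1) → L` as well, because `u (ψ i) ≈ L` is a combination of
total weight `≤ 1` in which `u (ψ i - 1)` has weight `c 0` and all other terms are `≲ L`.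
Inductively `u (ψ i - m) → L` for every `m`, and letting `i → ∞` in
`∑_{j < n} a j u (ψ i - j) ≤ 1` gives `L ∑_{j < n} a j ≤ 1`. As `∑ a j = ∞`, `L = 0`, so `u → 0`
and `b (k + 1) = u (k + 1) - u k → 0`.
-/

theorem sum_mul_sum_range_sub_eq_sum_sum_mul {R : Type*} [Semiring R] (a b : ℕ → R) (k : ℕ) :
    ∑ j ∈ range (k + 1), a j * ∑ i ∈ range (k - j + 1), b i =
      ∑ n ∈ range (k + 1), ∑ j ∈ range (n + 1), a j * b (n - j) := by
  induction k with
  | zero => simp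
  | succ k ih =>
    have hsplit : ∀ j ∈ range (k + 1), a j * ∑ i ∈ range (k + 1 - j + 1), b i =
        a j * ∑ i ∈ range (k - j + 1), b i + a j * b (k + 1 - j) := by
      intro j hj
      rw [Nat.sub_add_comm (Nat.lt_succ_iff.1 (mem_range.1 hj)), sum_range_succ, mul_add]
    rw [sum_range_succ, sum_congr rfl hsplit, sum_add_distrib, ih, sum_range_succ _ (k + 1),
      sum_range_succ (fun j => a j * b (k + 1 - j)) (k + 1), Nat.sub_self, zero_add,
      sum_range_one, add_assoc]

def IsRenewal (c u : ℕ → ℝ) : Prop :=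
  ∀ k, u (k + 1) = ∑ j ∈ range (k + 1), c j * u (k - j)

theorem isRenewal_sub_of_sum_mul_eq_one {a u : ℕ → ℝ} (ha0 : a 0 = 1)
    (h : ∀ k, ∑ j ∈ range (k + 1), a j * u (k - j) = 1) :
    IsRenewal (fun j => a j - a (j + 1)) u := by
  intro k
  have hk1 := h (k + 1)
  rw [sum_range_succ', ha0, one_mul, Nat.sub_zero] at hk1
  simp only [Nat.add_sub_add_right] at hk1
  simp only [sub_mul, sum_sub_distrib, h k]
  exact eq_sub_of_add_eq' hk1

theorem eventually_sum_Ico_le_of_summable {d : ℕ → ℝ} (hd : ∀ j, 0 ≤ d j) (hsum : Summable d)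
    {δ : ℝ} (hδ : 0 < δ) : ∀ᶠ m in atTop, ∀ n, ∑ j ∈ Ico m n, d j ≤ δ := by
  filter_upwards [(tendsto_order.1 hsum.hasSum.tendsto_sum_nat).1 _ (sub_lt_self _ hδ)]
    with m hm n
  rcases le_total m n with hmn | hnm
  · have hn : ∑ j ∈ range n, d j ≤ ∑' j, d j := hsum.sum_le_tsum _ fun j _ => hd j
    rw [← sum_range_add_sum_Ico _ hmn] at hn
    linarith
  · rw [Ico_eq_empty_of_le hnm, sum_empty]
    exact hδ.le

theorem eventually_sum_mul_le {d u : ℕ → ℝ} {s M δ : ℝ} (hd : ∀ j, 0 ≤ d j)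
    (hds : ∀ n, ∑ j ∈ range n, d j ≤ s) (hM : 0 ≤ M) (hu : ∀ n, u n ≤ 1)
    (huM : ∀ᶠ n in atTop, u n ≤ M) (hδ : 0 < δ) :
    ∀ᶠ n in atTop, ∑ j ∈ range n, d j * u (n - (j + 1)) ≤ s * M + δ := by
  obtain ⟨N, hN⟩ := eventually_atTop.1 huM
  obtain ⟨K, hK⟩ := eventually_atTop.1
    (eventually_sum_Ico_le_of_summable hd (summable_of_sum_range_le hd hds) hδ)
  filter_upwards [eventually_ge_atTop (N + K)] with n hn
  rw [← sum_range_add_sum_Ico _ (Nat.sub_le n N)]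
  have hhead : ∑ j ∈ range (n - N), d j * u (n - (j + 1)) ≤ s * M :=
    calc ∑ j ∈ range (n - N), d j * u (n - (j + 1)) ≤ ∑ j ∈ range (n - N), d j * M :=
          sum_le_sum fun j hj =>
            mul_le_mul_of_nonneg_left (hN _ (by have := mem_range.1 hj; omega)) (hd j)
      _ ≤ s * M := by rw [← sum_mul]; exact mul_le_mul_of_nonneg_right (hds _) hM
  have htail : ∑ j ∈ Ico (n - N) n, d j * u (n - (j + 1)) ≤ δ :=
    calc ∑ j ∈ Ico (n - N) n, d j * u (n - (j + 1)) ≤ ∑ j ∈ Ico (n - N) n, d j :=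
          sum_le_sum fun j _ => mul_le_of_le_one_right (hd j) (hu _)
      _ ≤ δ := hK _ (by omega) n
  linarith

namespace IsRenewal

variable {c u : ℕ → ℝ}

theorem mem_Icc (hu : IsRenewal c u) (hc : ∀ j, 0 ≤ c j) (hcsum : ∀ n, ∑ j ∈ range n, c j ≤ 1)
    (hu0 : u 0 ∈ Set.Icc 0 1) (k : ℕ) : u k ∈ Set.Icc 0 1 := by
  induction k using Nat.strong_induction_on with
  | _ k ih =>
    rcases k with _ | k
    · exact hu0
    have hprev : ∀ j ∈ range (k + 1), u (k - j) ∈ Set.Icc 0 1 := fun j _ => ih _ (by omega)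
    rw [hu k]
    constructor
    · exact sum_nonneg fun j hj => mul_nonneg (hc j) (hprev j hj).1
    · calc ∑ j ∈ range (k + 1), c j * u (k - j) ≤ ∑ j ∈ range (k + 1), c j :=
            sum_le_sum fun j hj => mul_le_of_le_one_right (hc j) (hprev j hj).2
        _ ≤ 1 := hcsum _

theorem tendsto_limsup_of_tendsto_limsup_succ (hu : IsRenewal c u) (hc : ∀ j, 0 ≤ c j)
    (hcsum : ∀ n, ∑ j ∈ range n, c j ≤ 1) (hc0 : 0 < c 0) (hu01 : ∀ k, u k ∈ Set.Icc 0 1)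
    {ψ : ℕ → ℕ} (hψ : Tendsto ψ atTop atTop)
    (hL : Tendsto (fun i => u (ψ i + 1)) atTop (𝓝 (limsup u atTop))) :
    Tendsto (fun i => u (ψ i)) atTop (𝓝 (limsup u atTop)) := by
  set L := limsup u atTop
  have hbdd : IsBoundedUnder (· ≤ ·) atTop u := isBoundedUnder_of ⟨1, fun k => (hu01 k).2⟩
  have hL0 : 0 ≤ L :=
    le_limsup_of_frequently_le (Frequently.of_forall fun k => (hu01 k).1) hbdd
  refine tendsto_order.2 ⟨fun L' hL' => ?_, fun L' hL' =>
    hψ.eventually (eventually_lt_of_limsup_lt hL' hbdd)⟩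
  set δ := c 0 * (L - L') / 4
  have hδ : 0 < δ := by have := sub_pos.2 hL'; positivity
  have hrest : ∀ᶠ n in atTop,
      ∑ j ∈ range n, c (j + 1) * u (n - (j + 1)) ≤ (1 - c 0) * (L + δ) + δ :=
    eventually_sum_mul_le (fun j => hc (j + 1))
      (fun n => by linarith [hcsum (n + 1), sum_range_succ' c n]) (by linarith)
      (fun n => (hu01 n).2)
      ((eventually_lt_of_limsup_lt (lt_add_of_pos_right L hδ) hbdd).mono fun _ h => h.le) hδ
  filter_upwards [hψ.eventually hrest, (tendsto_order.1 hL).1 (L - δ) (by linarith)]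
    with i hrest_i hlow_i
  have hsplit :
      u (ψ i + 1) = ∑ j ∈ range (ψ i), c (j + 1) * u (ψ i - (j + 1)) + c 0 * u (ψ i) := by
    rw [hu, sum_range_succ', Nat.sub_zero]
  have hδL : c 0 * (L - L') = 4 * δ := by ring
  have : c 0 * L' < c 0 * u (ψ i) := by linarith [mul_pos hc0 hδ]
  exact lt_of_mul_lt_mul_left this hc0.le

theorem tendsto_limsup_of_tendsto_limsup_sub (hu : IsRenewal c u) (hc : ∀ j, 0 ≤ c j)
    (hcsum : ∀ n, ∑ j ∈ range n, c j ≤ 1) (hc0 : 0 < c 0) (hu01 : ∀ k, u k ∈ Set.Icc 0 1)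
    {ψ : ℕ → ℕ} (hψ : Tendsto ψ atTop atTop)
    (hL : Tendsto (fun i => u (ψ i)) atTop (𝓝 (limsup u atTop))) (m : ℕ) :
    Tendsto (fun i => u (ψ i - m)) atTop (𝓝 (limsup u atTop)) := by
  induction m with
  | zero => simpa using hL
  | succ m ih =>
    refine hu.tendsto_limsup_of_tendsto_limsup_succ hc hcsum hc0 hu01
      ((tendsto_sub_atTop_nat (m + 1)).comp hψ) (ih.congr' ?_)
    filter_upwards [hψ.eventually (eventually_gt_atTop m)] with i hi
    show u (ψ i - m) = u (ψ i - (m + 1) + 1)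
    congr 1
    omega

end IsRenewal

theorem nonpos_of_tendsto_sub_of_not_summable {a u : ℕ → ℝ} (ha : ∀ j, 0 ≤ a j)
    (hu : ∀ k, 0 ≤ u k) (h : ∀ k, ∑ j ∈ range (k + 1), a j * u (k - j) ≤ 1)
    (hdiv : ¬ Summable a) {ψ : ℕ → ℕ} (hψ : Tendsto ψ atTop atTop) {L : ℝ}
    (hL : ∀ m, Tendsto (fun i => u (ψ i - m)) atTop (𝓝 L)) : L ≤ 0 := by
  by_contra! hLpos
  refine hdiv (summable_of_sum_range_le (c := 1 / L) ha fun n => ?_)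
  have hlim : Tendsto (fun i => ∑ j ∈ range n, a j * u (ψ i - j)) atTop
      (𝓝 ((∑ j ∈ range n, a j) * L)) := by
    rw [sum_mul]
    exact tendsto_finsetSum _ fun j _ => (hL j).const_mul (a j)
  have hle : ∀ᶠ i in atTop, ∑ j ∈ range n, a j * u (ψ i - j) ≤ 1 := by
    filter_upwards [hψ.eventually (eventually_ge_atTop n)] with i hi
    calc ∑ j ∈ range n, a j * u (ψ i - j) ≤ ∑ j ∈ range (ψ i + 1), a j * u (ψ i - j) :=
          sum_le_sum_of_subset_of_nonneg (range_subset_range.2 (by omega))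
            fun j _ _ => mul_nonneg (ha j) (hu _)
      _ ≤ 1 := h _
  exact (le_div_iff₀ hLpos).2 (le_of_tendsto hlim hle)

theorem stmt_5_general (a b : ℕ → ℝ) (ha0 : a 0 = 1) (ha1 : a 1 < 1)
    (hapos : ∀ k, 0 ≤ a k)
    (hamono : ∀ k, 1 ≤ k → a k ≤ a (k - 1))
    (hadiv : ¬ Summable a)
    (hb0 : b 0 = 1)
    (hconv : ∀ k, 1 ≤ k → ∑ j ∈ Finset.range (k + 1), a j * b (k - j) = 0) :
    Tendsto b atTop (nhds 0) := by
  set u : ℕ → ℝ := fun k => ∑ i ∈ range (k + 1), b i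
  set c : ℕ → ℝ := fun j => a j - a (j + 1)
  have hau : ∀ k, ∑ j ∈ range (k + 1), a j * u (k - j) = 1 := fun k => by
    rw [sum_mul_sum_range_sub_eq_sum_sum_mul, sum_range_succ',
      sum_eq_zero fun n _ => hconv (n + 1) n.succ_pos]
    simp [ha0, hb0]
  have hren : IsRenewal c u := isRenewal_sub_of_sum_mul_eq_one ha0 hau
  have hc : ∀ j, 0 ≤ c j := fun j => sub_nonneg.2 (by simpa using hamono (j + 1) j.succ_pos)
  have hcsum : ∀ n, ∑ j ∈ range n, c j ≤ 1 := fun n => by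
    simp only [c, sum_range_sub', ha0]; linarith [hapos n]
  have hc0 : 0 < c 0 := by simp only [c, ha0, zero_add]; linarith
  have hu := hren.mem_Icc hc hcsum (by simp [u, hb0])
  have hbdd : IsBoundedUnder (· ≤ ·) atTop u := isBoundedUnder_of ⟨1, fun k => (hu k).2⟩
  obtain ⟨ψ, hψL, hψ⟩ := exists_seq_tendsto_limsup (f := atTop) (u := u)
    (isBoundedUnder_of ⟨0, fun k => (hu k).1⟩).isCoboundedUnder_flip hbdd
  have hL : limsup u atTop ≤ 0 :=
    nonpos_of_tendsto_sub_of_not_summable hapos (fun k => (hu k).1) (fun k => (hau k).le) hadiv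
      hψ (hren.tendsto_limsup_of_tendsto_limsup_sub hc hcsum hc0 hu hψ hψL)
  have hu0 : Tendsto u atTop (𝓝 0) := tendsto_order.2
    ⟨fun l hl => Eventually.of_forall fun k => hl.trans_le (hu k).1,
     fun l hl => eventually_lt_of_limsup_lt (hL.trans_lt hl) hbdd⟩
  have hb : ∀ k, b (k + 1) = u (k + 1) - u k := fun k => by
    simp only [u, sum_range_succ _ (k + 1)]; ring
  refine (tendsto_add_atTop_iff_nat 1).1 ?_
  simpa only [hb, Function.comp_def, sub_self] using (hu0.comp (tendsto_add_atTop_nat 1)).sub hu0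

theorem stmt_5 (a b : ℕ → ℝ) (ha0 : a 0 = 1) (ha1 : a 1 < 1)
    (hapos : ∀ k, 0 ≤ a k)
    (hamono : ∀ k, 1 ≤ k → a k ≤ a (k - 1))
    (halim : Tendsto a atTop (nhds 0))
    (hadiv : ¬ Summable a)
    (hb0 : b 0 = 1)
    (hconv : ∀ k, 1 ≤ k → ∑ j ∈ Finset.range (k + 1), a j * b (k - j) = 0) :
    Tendsto b atTop (nhds 0) :=
  stmt_5_general a b ha0 ha1 hapos hamono hadiv hb0 hconv
end

section
/- Let a = {a_k} satisfy 1 = a_0 ≥ a_1 ≥ a_2 ≥ ... ≥ 0 with a_k → 0 and ∑_{k=0}^∞ a_k = ∞ (allowing a_1 = 1). Let u be the fundamental sequence satisfying ∑_{j=0}^{k} a_j u_{k-j} = 1 for all k ≥ 0. Then lim_{k→∞} u_k = 0. -/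
/-!
With `q j = a j - a (j + 1) ≥ 0` the defining identity becomes the renewal recursion
`u (n + 1) = ∑_{j ≤ n} q j * u (n - j)`, where `∑_{j ≤ n} q j = 1 - a (n + 1)`; hence `0 ≤ u ≤ 1`.
Suppose `L = limsup u` is positive. Along an ultrafilter on which `u → L`, every shift
`k ↦ u (k - j)` converges to some `v j ≤ L`, and `v 0 = L`. In the limit the recursion gives
`v m ≤ ∑_{j < N} q j * v (m + j + 1) + a N`, so `v m = L` forces `v (m + i + 1) = L` whenever
`q i > 0`; thus `v (k * t) = L` for `t = i + 1`. The identity itself gives `∑ a j * v j ≤ 1`,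
so `L * ∑_k a (k * t) ≤ 1`, whereas `t * ∑_k a (k * t) ≥ ∑_j a j = ∞` since `a` is antitone.
-/

open Finset Filter Topology

section Renewal

variable {a u : ℕ → ℝ}

theorem renewal_succ (ha0 : a 0 = 1)
    (hu : ∀ k, ∑ j ∈ range (k + 1), a j * u (k - j) = 1) (n : ℕ) :
    u (n + 1) = ∑ j ∈ range (n + 1), (a j - a (j + 1)) * u (n - j) := by
  have h := hu (n + 1)
  rw [sum_range_succ'] at h
  simp only [Nat.add_sub_add_right, Nat.sub_zero, ha0, one_mul] at h
  simp only [sub_mul, sum_sub_distrib, hu n]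
  linarith

theorem renewal_mem_Icc (ha0 : a 0 = 1) (hanti : Antitone a) (hapos : ∀ k, 0 ≤ a k)
    (hu : ∀ k, ∑ j ∈ range (k + 1), a j * u (k - j) = 1) (k : ℕ) : u k ∈ Set.Icc 0 1 := by
  induction k using Nat.strong_induction_on with
  | _ k ih =>
    obtain _ | n := k
    · have h0 : u 0 = 1 := by simpa [ha0] using hu 0
      simp [h0]
    have hq : ∀ j, 0 ≤ a j - a (j + 1) := fun j => sub_nonneg.2 (hanti j.le_succ)
    have hprev : ∀ j ∈ range (n + 1), u (n - j) ∈ Set.Icc 0 1 := fun j _ => ih _ (by omega)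
    rw [renewal_succ ha0 hu]
    constructor
    · exact sum_nonneg fun j hj => mul_nonneg (hq j) (hprev j hj).1
    · calc ∑ j ∈ range (n + 1), (a j - a (j + 1)) * u (n - j)
          ≤ ∑ j ∈ range (n + 1), (a j - a (j + 1)) :=
            sum_le_sum fun j hj => mul_le_of_le_one_right (hq j) (hprev j hj).2
        _ = 1 - a (n + 1) := by rw [sum_range_sub', ha0]
        _ ≤ 1 := by linarith [hapos (n + 1)]

theorem renewal_le_sum_add (ha0 : a 0 = 1) (hanti : Antitone a) (hapos : ∀ k, 0 ≤ a k)
    (hu : ∀ k, ∑ j ∈ range (k + 1), a j * u (k - j) = 1) {n N : ℕ} (hN : N ≤ n + 1) :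
    u (n + 1) ≤ ∑ j ∈ range N, (a j - a (j + 1)) * u (n - j) + a N := by
  have htail : ∑ j ∈ Ico N (n + 1), (a j - a (j + 1)) * u (n - j) ≤ a N :=
    calc ∑ j ∈ Ico N (n + 1), (a j - a (j + 1)) * u (n - j)
        ≤ ∑ j ∈ Ico N (n + 1), (a j - a (j + 1)) :=
          sum_le_sum fun j _ => mul_le_of_le_one_right (sub_nonneg.2 (hanti j.le_succ))
            (renewal_mem_Icc ha0 hanti hapos hu _).2
      _ = a N - a (n + 1) := by rw [sum_Ico_eq_sub _ hN, sum_range_sub', sum_range_sub']; ring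
      _ ≤ a N := by linarith [hapos (n + 1)]
  rw [renewal_succ ha0 hu, ← sum_range_add_sum_Ico _ hN]
  linarith

end Renewal

section LimitProfile

variable {a u v : ℕ → ℝ} {F : Filter ℕ} [F.NeBot]

theorem limit_le_sum_add (ha0 : a 0 = 1) (hanti : Antitone a) (hapos : ∀ k, 0 ≤ a k)
    (hu : ∀ k, ∑ j ∈ range (k + 1), a j * u (k - j) = 1) (hF : F ≤ atTop)
    (hv : ∀ j, Tendsto (fun k => u (k - j)) F (𝓝 (v j))) (m N : ℕ) :
    v m ≤ ∑ j ∈ range N, (a j - a (j + 1)) * v (m + j + 1) + a N := by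
  refine le_of_tendsto_of_tendsto (hv m)
    ((tendsto_finsetSum _ fun j _ => (hv (m + j + 1)).const_mul _).add_const (a N)) ?_
  filter_upwards [hF (eventually_ge_atTop (m + N + 1))] with k hk
  have hkm : k - m = k - m - 1 + 1 := by omega
  have hshift : ∀ j ∈ range N, k - m - 1 - j = k - (m + j + 1) := fun j _ => by omega
  rw [hkm, ← sum_congr rfl fun j hj => by rw [← hshift j hj]]
  exact renewal_le_sum_add ha0 hanti hapos hu (by omega)

theorem sum_mul_limit_le_one (hapos : ∀ k, 0 ≤ a k) (hu0 : ∀ k, 0 ≤ u k)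
    (hu : ∀ k, ∑ j ∈ range (k + 1), a j * u (k - j) = 1) (hF : F ≤ atTop)
    (hv : ∀ j, Tendsto (fun k => u (k - j)) F (𝓝 (v j))) (M : ℕ) :
    ∑ j ∈ range M, a j * v j ≤ 1 := by
  refine le_of_tendsto (tendsto_finsetSum _ fun j _ => (hv j).const_mul (a j)) ?_
  filter_upwards [hF (eventually_ge_atTop M)] with k hk
  calc ∑ j ∈ range M, a j * u (k - j)
      ≤ ∑ j ∈ range (k + 1), a j * u (k - j) :=
        sum_le_sum_of_subset_of_nonneg (range_subset_range.2 (by omega))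
          fun j _ _ => mul_nonneg (hapos j) (hu0 _)
    _ = 1 := hu k

end LimitProfile

theorem eq_add_succ_of_eq_of_le_sum_add {a v : ℕ → ℝ} {L : ℝ} (ha0 : a 0 = 1) (hanti : Antitone a)
    (halim : Tendsto a atTop (𝓝 0)) (hvL : ∀ j, v j ≤ L)
    (hv : ∀ m N, v m ≤ ∑ j ∈ range N, (a j - a (j + 1)) * v (m + j + 1) + a N)
    {i : ℕ} (hi : a (i + 1) < a i) {m : ℕ} (hm : v m = L) : v (m + i + 1) = L := by
  have hq : ∀ j, 0 ≤ a j - a (j + 1) := fun j => sub_nonneg.2 (hanti j.le_succ)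
  have hgap : ∀ N, i < N → (a i - a (i + 1)) * (L - v (m + i + 1)) ≤ a N * (1 - L) := by
    intro N hN
    have hsingle : (a i - a (i + 1)) * (L - v (m + i + 1))
        ≤ ∑ j ∈ range N, (a j - a (j + 1)) * (L - v (m + j + 1)) :=
      single_le_sum (f := fun j => (a j - a (j + 1)) * (L - v (m + j + 1)))
        (fun j _ => mul_nonneg (hq j) (sub_nonneg.2 (hvL _))) (mem_range.2 hN)
    have hsplit : ∑ j ∈ range N, (a j - a (j + 1)) * (L - v (m + j + 1))
        = (1 - a N) * L - ∑ j ∈ range N, (a j - a (j + 1)) * v (m + j + 1) := by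
      rw [← ha0, ← sum_range_sub', sum_mul, ← sum_sub_distrib]
      exact sum_congr rfl fun j _ => by ring
    linarith [hv m N]
  have hlim : Tendsto (fun N => a N * (1 - L)) atTop (𝓝 0) := by
    simpa using halim.mul_const (1 - L)
  have hgap0 := ge_of_tendsto hlim ((eventually_gt_atTop i).mono hgap)
  exact le_antisymm (hvL _) (by linarith [nonpos_of_mul_nonpos_right hgap0 (sub_pos.2 hi)])

theorem exists_succ_lt_of_tendsto_zero {a : ℕ → ℝ} (halim : Tendsto a atTop (𝓝 0))
    (ha0 : 0 < a 0) : ∃ i, a (i + 1) < a i := by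
  by_contra! h
  exact ha0.not_ge (ge_of_tendsto' halim fun n => monotone_nat_of_le_succ h (Nat.zero_le n))

theorem sum_range_comp_mul_le {f : ℕ → ℝ} (hf : ∀ j, 0 ≤ f j) {t : ℕ} (ht : 0 < t) (n : ℕ) :
    ∑ k ∈ range n, f (k * t) ≤ ∑ j ∈ range (n * t), f j := by
  classical
  have hinj : Set.InjOn (· * t) (range n : Set ℕ) := fun x _ y _ h =>
    Nat.eq_of_mul_eq_mul_right ht h
  rw [← sum_image hinj]
  refine sum_le_sum_of_subset_of_nonneg (fun j hj => ?_) fun j _ _ => hf j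
  obtain ⟨k, hk, rfl⟩ := mem_image.1 hj
  exact mem_range.2 (Nat.mul_lt_mul_of_pos_right (mem_range.1 hk) ht)

theorem Antitone.sum_range_mul_le {a : ℕ → ℝ} (hanti : Antitone a) (t n : ℕ) :
    ∑ j ∈ range (n * t), a j ≤ t * ∑ k ∈ range n, a (k * t) := by
  induction n with
  | zero => simp
  | succ n ih =>
    have hblock : ∑ i ∈ range t, a (n * t + i) ≤ t * a (n * t) := by
      simpa using sum_le_sum fun i (_ : i ∈ range t) => hanti (Nat.le_add_right (n * t) i)
    rw [add_mul, one_mul, sum_range_add, sum_range_succ, mul_add]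
    linarith

theorem Antitone.summable_of_summable_comp_mul {a : ℕ → ℝ} (hanti : Antitone a)
    (hapos : ∀ k, 0 ≤ a k) {t : ℕ} (ht : 0 < t) (h : Summable fun k => a (k * t)) :
    Summable a := by
  refine summable_of_sum_range_le (c := t * ∑' k, a (k * t)) hapos fun n => ?_
  calc ∑ j ∈ range n, a j
      ≤ ∑ j ∈ range (n * t), a j :=
        sum_le_sum_of_subset_of_nonneg (range_subset_range.2 (Nat.le_mul_of_pos_right n ht))
          fun j _ _ => hapos j
    _ ≤ t * ∑ k ∈ range n, a (k * t) := hanti.sum_range_mul_le t n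
    _ ≤ t * ∑' k, a (k * t) :=
        mul_le_mul_of_nonneg_left (h.sum_le_tsum _ fun k _ => hapos _) (Nat.cast_nonneg t)

theorem IsCompact.exists_tendsto_ultrafilter {X ι : Type*} [TopologicalSpace X] {s : Set X}
    (hs : IsCompact s) (𝒰 : Ultrafilter ι) {f : ι → X} (hf : ∀ i, f i ∈ s) :
    ∃ x ∈ s, Tendsto f 𝒰 (𝓝 x) :=
  hs.ultrafilter_le_nhds' (𝒰.map f) (Ultrafilter.mem_map.2 (Eventually.of_forall hf))

theorem le_limsup_of_tendsto_comp_sub {u : ℕ → ℝ} (hbdd : IsBoundedUnder (· ≤ ·) atTop u)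
    {𝒰 : Ultrafilter ℕ} (h𝒰 : (𝒰 : Filter ℕ) ≤ atTop) {j : ℕ} {x : ℝ}
    (hx : Tendsto (fun k => u (k - j)) 𝒰 (𝓝 x)) : x ≤ limsup u atTop :=
  MapClusterPt.le_limsup (mapClusterPt_iff_ultrafilter.2
    ⟨𝒰.map (· - j), (tendsto_sub_atTop_nat j).mono_left h𝒰, tendsto_map'_iff.2 hx⟩) hbdd

theorem tendsto_zero_of_limsup_nonpos {ι : Type*} {l : Filter ι} {u : ι → ℝ}
    (hu0 : ∀ k, 0 ≤ u k) (hbdd : IsBoundedUnder (· ≤ ·) l u) (h : limsup u l ≤ 0) :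
    Tendsto u l (𝓝 0) :=
  tendsto_order.2 ⟨fun _ hε => Eventually.of_forall fun k => hε.trans_le (hu0 k),
    fun _ hε => eventually_lt_of_limsup_lt (h.trans_lt hε) hbdd⟩

theorem stmt_6_general (a u : ℕ → ℝ) (ha0 : a 0 = 1)
    (hamono : ∀ k, 1 ≤ k → a k ≤ a (k - 1))
    (halim : Tendsto a atTop (nhds 0))
    (hadiv : ¬ Summable a)
    (hu : ∀ k, ∑ j ∈ Finset.range (k + 1), a j * u (k - j) = 1) :
    Tendsto u atTop (nhds 0) := by
  have hanti : Antitone a :=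
    antitone_nat_of_succ_le fun n => by simpa using hamono (n + 1) (by omega)
  have hapos : ∀ k, 0 ≤ a k := hanti.le_of_tendsto halim
  have hu01 := renewal_mem_Icc ha0 hanti hapos hu
  have hbdd : IsBoundedUnder (· ≤ ·) atTop u := isBoundedUnder_of ⟨1, fun k => (hu01 k).2⟩
  set L := limsup u atTop
  refine tendsto_zero_of_limsup_nonpos (fun k => (hu01 k).1) hbdd (not_lt.1 fun hL => ?_)
  obtain ⟨𝒰, h𝒰, huL⟩ := mapClusterPt_iff_ultrafilter.1 (MapClusterPt.limsup
    (isBoundedUnder_of ⟨0, fun k => (hu01 k).1⟩).isCoboundedUnder_flip hbdd)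
  choose v hv01 hv using fun j => isCompact_Icc.exists_tendsto_ultrafilter 𝒰 fun k => hu01 (k - j)
  have hvL : ∀ j, v j ≤ L := fun j => le_limsup_of_tendsto_comp_sub hbdd h𝒰 (hv j)
  obtain ⟨i, hi⟩ := exists_succ_lt_of_tendsto_zero halim (ha0 ▸ one_pos)
  have hv_mul : ∀ k, v (k * (i + 1)) = L := by
    intro k
    induction k with
    | zero => simpa using tendsto_nhds_unique (hv 0) (by simpa using huL)
    | succ k ih =>
      rw [add_one_mul, ← add_assoc]
      exact eq_add_succ_of_eq_of_le_sum_add ha0 hanti halim hvL (limit_le_sum_add ha0 hanti hapos hu h𝒰 hv) hi ih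
  refine hadiv (hanti.summable_of_summable_comp_mul hapos i.succ_pos
    (summable_of_sum_range_le (c := 1 / L) (fun k => hapos _) fun n => (le_div_iff₀ hL).2 ?_))
  calc (∑ k ∈ range n, a (k * (i + 1))) * L
      = ∑ k ∈ range n, a (k * (i + 1)) * v (k * (i + 1)) := by simp only [sum_mul, hv_mul]
    _ ≤ ∑ j ∈ range (n * (i + 1)), a j * v j :=
        sum_range_comp_mul_le (fun j => mul_nonneg (hapos j) (hv01 j).1) i.succ_pos n
    _ ≤ 1 := sum_mul_limit_le_one hapos (fun k => (hu01 k).1) hu h𝒰 hv _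

theorem stmt_6 (a u : ℕ → ℝ) (ha0 : a 0 = 1)
    (hapos : ∀ k, 0 ≤ a k)
    (hamono : ∀ k, 1 ≤ k → a k ≤ a (k - 1))
    (halim : Tendsto a atTop (nhds 0))
    (hadiv : ¬ Summable a)
    (hu : ∀ k, ∑ j ∈ Finset.range (k + 1), a j * u (k - j) = 1) :
    Tendsto u atTop (nhds 0) :=
  stmt_6_general a u ha0 hamono halim hadiv hu
end

section
/- Let a = {a_k} be a nonnegative log-convex sequence with a_0 = 1. Let b = {b_k} be defined by b_0 = 1 and ∑_{j=0}^{k} a_j b_{k-j} = 0 for k ≥ 1. Then b_k ≤ 0 for all k ≥ 1. -/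
open Finset

/-- If `a 1 > 0` then all terms are positive, by log-convexity. -/
lemma stmt9_allpos (a : ℕ → ℝ) (ha0 : a 0 = 1)
    (hlc : ∀ k, 1 ≤ k → (a k) ^ 2 ≤ a (k - 1) * a (k + 1))
    (h1 : 0 < a 1) : ∀ k, 0 < a k := by
  have key : ∀ k, 0 < a k ∧ 0 < a (k + 1) := by
    intro k
    induction k with
    | zero => exact ⟨by rw [ha0]; norm_num, h1⟩
    | succ n ih =>
      refine ⟨ih.2, ?_⟩
      have h := hlc (n + 1) (by omega)
      simp only [Nat.add_sub_cancel] at h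
      nlinarith [ih.1, ih.2]
  exact fun k => (key k).1

/-- Ratio monotonicity: `a(i+1)/a i ≤ a(i+d+1)/a(i+d)`. -/
lemma stmt9_ratio (a : ℕ → ℝ)
    (hlc : ∀ k, 1 ≤ k → (a k) ^ 2 ≤ a (k - 1) * a (k + 1))
    (hpos : ∀ k, 0 < a k) :
    ∀ d i, a (i + 1) * a (i + d) ≤ a i * a (i + d + 1) := by
  intro d
  induction d with
  | zero => intro i; simp [mul_comm]
  | succ n ih =>
    intro i
    have h1 := ih i
    have h2 := hlc (i + n + 1) (by omega)
    simp only [Nat.add_sub_cancel] at h2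
    have key : a (i + 1) * a (i + n + 1) ≤ a i * a (i + n + 1 + 1) := by
      nlinarith [hpos (i + n), hpos (i + n + 1), hpos i, hpos (i + 1),
        mul_le_mul_of_nonneg_left h2 (hpos i).le,
        mul_le_mul_of_nonneg_right h1 (hpos (i + n + 1)).le]
    calc a (i + 1) * a (i + (n + 1)) = a (i + 1) * a (i + n + 1) := by ring_nf
      _ ≤ a i * a (i + n + 1 + 1) := key
      _ = a i * a (i + (n + 1) + 1) := by ring_nf

theorem stmt_9 (a b : ℕ → ℝ) (hapos : ∀ k, 0 ≤ a k) (ha0 : a 0 = 1)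
    (hlc : ∀ k, 1 ≤ k → (a k) ^ 2 ≤ a (k - 1) * a (k + 1))
    (hb0 : b 0 = 1)
    (hconv : ∀ k, 1 ≤ k → ∑ j ∈ Finset.range (k + 1), a j * b (k - j) = 0) :
    ∀ k, 1 ≤ k → b k ≤ 0 := by
  rcases lt_or_eq_of_le (hapos 1) with h1 | h1
  · -- positive case
    have hpos : ∀ k, 0 < a k := stmt9_allpos a ha0 hlc h1
    intro k
    induction k using Nat.strong_induction_on with
    | _ k IH =>
      intro hk
      match k, hk with
      | 1, _ =>
        have h := hconv 1 (by norm_num)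
        simp [Finset.sum_range_succ, ha0, hb0] at h
        linarith [hapos 1]
      | (m + 2), _ =>
        have E1 := hconv (m + 2) (by omega)
        have E2 := hconv (m + 1) (by omega)
        -- peel first term of E1
        rw [Finset.sum_range_succ'] at E1
        rw [ha0, one_mul] at E1
        have h3 : ∑ i ∈ Finset.range (m + 2), a (i + 1) * b (m + 1 - i) = -b (m + 2) := by
          have : ∑ i ∈ Finset.range (m + 2), a (i + 1) * b (m + 2 - (i + 1))
              = ∑ i ∈ Finset.range (m + 2), a (i + 1) * b (m + 1 - i) := by
            apply Finset.sum_congr rfl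
            intro i _
            have hi2 : m + 2 - (i + 1) = m + 1 - i := by omega
            rw [hi2]
          rw [this] at E1
          norm_num at E1
          linarith
        have key : a (m + 1) * b (m + 2)
            = ∑ i ∈ Finset.range (m + 2),
                (a (m + 2) * a i - a (m + 1) * a (i + 1)) * b (m + 1 - i) := by
          have expand : ∑ i ∈ Finset.range (m + 2),
                (a (m + 2) * a i - a (m + 1) * a (i + 1)) * b (m + 1 - i)
              = a (m + 2) * (∑ i ∈ Finset.range (m + 2), a i * b (m + 1 - i))
                - a (m + 1) * (∑ i ∈ Finset.range (m + 2), a (i + 1) * b (m + 1 - i)) := by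
            rw [Finset.mul_sum, Finset.mul_sum, ← Finset.sum_sub_distrib]
            apply Finset.sum_congr rfl
            intro i _
            ring
          rw [expand, E2, h3]
          ring
        have hsum : (∑ i ∈ Finset.range (m + 2),
            (a (m + 2) * a i - a (m + 1) * a (i + 1)) * b (m + 1 - i)) ≤ 0 := by
          apply Finset.sum_nonpos
          intro i hi
          rw [Finset.mem_range] at hi
          rcases eq_or_lt_of_le (Nat.lt_succ_iff.mp hi) with heq | hlt
          · -- i = m + 1 : coefficient is zero
            subst heq
            have : a (m + 2) * a (m + 1) - a (m + 1) * a (m + 1 + 1) = 0 := by ring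
            rw [this, zero_mul]
          · -- i ≤ m : coefficient ≥ 0, b ≤ 0
            apply mul_nonpos_of_nonneg_of_nonpos
            · have hr := stmt9_ratio a hlc hpos (m + 1 - i) i
              have hd : i + (m + 1 - i) = m + 1 := by omega
              rw [hd] at hr
              linarith
            · exact IH (m + 1 - i) (by omega) (by omega)
        have hb2 : a (m + 1) * b (m + 2) ≤ 0 := by rw [key]; exact hsum
        nlinarith [hpos (m + 1)]
  · -- degenerate case: a 1 = 0 forces a k = 0 for all k ≥ 1, hence b k = 0
    have hz : ∀ k, 1 ≤ k → a k = 0 := by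
      intro k
      induction k with
      | zero => omega
      | succ n ih =>
        intro _
        rcases Nat.eq_zero_or_pos n with h | h
        · subst h; exact h1.symm
        · have hn := ih h
          have hl := hlc (n + 1) (by omega)
          simp only [Nat.add_sub_cancel] at hl
          rw [hn, zero_mul] at hl
          nlinarith
    intro k hk
    have h := hconv k hk
    obtain ⟨n, rfl⟩ : ∃ n, k = n + 1 := ⟨k - 1, by omega⟩
    rw [Finset.sum_range_succ'] at h
    rw [ha0, one_mul] at h
    have : ∑ i ∈ Finset.range (n + 1), a (i + 1) * b (n + 1 - (i + 1)) = 0 := by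
      apply Finset.sum_eq_zero
      intro i _
      rw [hz (i + 1) (by omega), zero_mul]
    rw [this, zero_add] at h
    simp at h
    linarith
end

section
/- Let a = {a_k} satisfy 1 = a_0 > a_1 ≥ a_2 ≥ ... ≥ 0, a_k → 0, ∑_{k=0}^∞ a_k = ∞, and suppose a is log-convex (a_k^2 ≤ a_{k-1} a_{k+1} for k ≥ 1). Let b = {b_k} be defined by b_0 = 1 and ∑_{j=0}^{k} a_j b_{k-j} = 0 for k ≥ 1. Then ∑_{k=0}^∞ |b_k| = 2. -/
open Finset Filter

theorem stmt_11 (a b : ℕ → ℝ) (ha0 : a 0 = 1) (ha1 : a 1 < 1)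
    (hapos : ∀ k, 0 ≤ a k)
    (hamono : ∀ k, 1 ≤ k → a k ≤ a (k - 1))
    (halim : Tendsto a atTop (nhds 0))
    (hadiv : ¬ Summable a)
    (hlc : ∀ k, 1 ≤ k → (a k) ^ 2 ≤ a (k - 1) * a (k + 1))
    (hb0 : b 0 = 1)
    (hconv : ∀ k, 1 ≤ k → ∑ j ∈ Finset.range (k + 1), a j * b (k - j) = 0) :
    (Summable fun k => |b k|) ∧ ∑' k, |b k| = 2 := by
  -- basic monotonicity facts about a
  have hstep : ∀ n : ℕ, a (n + 1) ≤ a n := fun n => by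
    have := hamono (n + 1) (by omega)
    simpa using this
  have hanti : ∀ i j : ℕ, i ≤ j → a j ≤ a i := fun i j hij =>
    antitone_nat_of_succ_le hstep hij
  have hale1 : ∀ k, a k ≤ 1 := fun k => ha0 ▸ hanti 0 k (Nat.zero_le k)
  -- positivity of a (uses divergence)
  have apos : ∀ k, 0 < a k := by
    by_contra h
    push_neg at h
    obtain ⟨k, hk⟩ := h
    have hk0 : a k = 0 := le_antisymm hk (hapos k)
    have hz : ∀ m, a (k + m) = 0 := by
      intro m
      induction m with
      | zero => simpa using hk0
      | succ m ih =>
        have h1 := hstep (k + m)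
        have h2 := hapos (k + m + 1)
        have he : k + (m + 1) = k + m + 1 := by omega
        rw [he]; linarith
    refine hadiv (summable_of_ne_finset_zero (s := Finset.range k) (fun m hm => ?_))
    have hkm : k ≤ m := by simpa using hm
    have hz' := hz (m - k)
    rwa [Nat.add_sub_cancel' hkm] at hz'
  -- ratio sequence is monotone
  set q : ℕ → ℝ := fun m => a (m + 1) / a m with hq
  have qmono : Monotone q := by
    apply monotone_nat_of_le_succ
    intro m
    rw [hq]
    rw [div_le_div_iff₀ (apos m) (apos (m + 1))]
    have := hlc (m + 1) (by omega)
    simp only [Nat.add_sub_cancel] at this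
    nlinarith
  have haq : ∀ m, a (m + 1) = q m * a m := fun m => by
    rw [hq]
    exact (div_mul_cancel₀ (a (m + 1)) (apos m).ne').symm
  -- transposed convolution identity
  have hconv' : ∀ k, 1 ≤ k → ∑ j ∈ Finset.range (k + 1), b j * a (k - j) = 0 := by
    intro k hk
    have hr := Finset.sum_range_reflect (fun j => a j * b (k - j)) (k + 1)
    rw [← hconv k hk, ← hr]
    apply Finset.sum_congr rfl
    intro j hj
    have hj' : j ≤ k := by simpa [Nat.lt_succ_iff] using hj
    have h1 : k + 1 - 1 - j = k - j := by omega
    have h2 : k - (k - j) = j := by omega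
    rw [h1, h2, mul_comm]
  -- renewal identity : a n = ∑_{j<n} (-b (j+1)) * a (n-1-j)  for n ≥ 1
  have hren : ∀ n, 1 ≤ n → a n = ∑ j ∈ Finset.range n, (-b (j + 1)) * a (n - 1 - j) := by
    intro n hn
    have h0 := hconv' n hn
    rw [Finset.sum_range_succ'] at h0
    have he : ∀ j ∈ Finset.range n, b (j + 1) * a (n - (j + 1)) = b (j + 1) * a (n - 1 - j) := by
      intro j hj
      have : n - (j + 1) = n - 1 - j := by omega
      rw [this]
    rw [Finset.sum_congr rfl he] at h0
    have : b 0 * a (n - 0) = a n := by simp [hb0]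
    rw [this] at h0
    have := h0
    simp only [neg_mul, Finset.sum_neg_distrib]
    linarith [h0]
  -- Kaluza: b (n+1) ≤ 0
  have hkaluza : ∀ n : ℕ, 0 ≤ -b (n + 1) := by
    intro n
    induction n using Nat.strong_induction_on with
    | _ n IH =>
      have hI := hren (n + 1) (by omega)
      rw [Finset.sum_range_succ] at hI
      have hsimp : (n + 1 - 1 - n : ℕ) = 0 := by omega
      rw [hsimp, ha0, mul_one] at hI
      -- hI : a (n+1) = ∑ j ∈ range n, (-b (j+1)) * a (n+1-1-j) + (-b (n+1))
      rcases Nat.eq_zero_or_pos n with hn0 | hn1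
      · subst hn0
        simp at hI
        linarith [apos 1]
      · -- bound the sum
        have hbound : ∑ j ∈ Finset.range n, (-b (j + 1)) * a (n + 1 - 1 - j)
            ≤ q n * ∑ j ∈ Finset.range n, (-b (j + 1)) * a (n - 1 - j) := by
          rw [Finset.mul_sum]
          apply Finset.sum_le_sum
          intro j hj
          have hjn : j < n := Finset.mem_range.mp hj
          have h1 : (n + 1 - 1 - j : ℕ) = (n - 1 - j) + 1 := by omega
          rw [h1, haq (n - 1 - j)]
          have hq1 : q (n - 1 - j) ≤ q n := qmono (by omega)
          have hb1 : 0 ≤ -b (j + 1) := IH j hjn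
          have ha1 : 0 ≤ a (n - 1 - j) := hapos _
          have hq0 : 0 ≤ q (n - 1 - j) := div_nonneg (hapos _) (hapos _)
          calc (-b (j + 1)) * (q (n - 1 - j) * a (n - 1 - j))
              ≤ (-b (j + 1)) * (q n * a (n - 1 - j)) :=
                mul_le_mul_of_nonneg_left
                  (mul_le_mul_of_nonneg_right hq1 ha1) hb1
            _ = q n * ((-b (j + 1)) * a (n - 1 - j)) := by ring
        have hIn := hren n hn1
        rw [← hIn] at hbound
        rw [← haq n] at hbound
        linarith [hI, hbound]
  have hbneg : ∀ k, 1 ≤ k → b k ≤ 0 := by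
    intro k hk
    have := hkaluza (k - 1)
    have he : k - 1 + 1 = k := by omega
    rw [he] at this
    linarith
  -- partial sums of b
  set B : ℕ → ℝ := fun n => ∑ k ∈ Finset.range (n + 1), b k with hB
  have hB0 : B 0 = 1 := by simp [hB, hb0]
  have hBstep : ∀ n, B (n + 1) = B n + b (n + 1) := by
    intro n
    rw [hB]
    simp [Finset.sum_range_succ]
  have hBanti : ∀ i j : ℕ, i ≤ j → B j ≤ B i := by
    intro i j hij
    refine antitone_nat_of_succ_le (fun n => ?_) hij
    rw [hBstep n]
    linarith [hbneg (n + 1) (by omega)]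
  have hBle1 : ∀ n, B n ≤ 1 := fun n => hB0 ▸ hBanti 0 n (Nat.zero_le n)
  -- key identity : ∑_{j ≤ N} a j * B (N - j) = 1
  have hK : ∀ N, ∑ j ∈ Finset.range (N + 1), a j * B (N - j) = 1 := by
    intro N
    induction N with
    | zero => simp [hB0, ha0]
    | succ N IH =>
      rw [Finset.sum_range_succ]
      have hsimp : (N + 1 - (N + 1) : ℕ) = 0 := by omega
      rw [hsimp, hB0, mul_one]
      have hsplit : ∀ j ∈ Finset.range (N + 1),
          a j * B (N + 1 - j) = a j * B (N - j) + a j * b (N + 1 - j) := by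
        intro j hj
        have hjN : j ≤ N := by simpa [Nat.lt_succ_iff] using hj
        have h1 : (N + 1 - j : ℕ) = (N - j) + 1 := by omega
        rw [h1, hBstep (N - j), ← h1]
        ring
      rw [Finset.sum_congr rfl hsplit, Finset.sum_add_distrib, IH]
      have hc := hconv (N + 1) (by omega)
      rw [Finset.sum_range_succ] at hc
      have h2 : (N + 1 - (N + 1) : ℕ) = 0 := by omega
      rw [h2, hb0, mul_one] at hc
      linarith
  -- divergence of partial sums of a
  have hAtop : Tendsto (fun n => ∑ i ∈ Finset.range n, a i) atTop atTop :=
    (not_summable_iff_tendsto_nat_atTop_of_nonneg hapos).mp hadiv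
  have hAex : ∀ C : ℝ, ∃ m : ℕ, C < ∑ i ∈ Finset.range (m + 1), a i := by
    intro C
    obtain ⟨n, hn1, hn2⟩ := ((hAtop.eventually_gt_atTop C).and (eventually_ge_atTop 1)).exists
    refine ⟨n - 1, ?_⟩
    have : n - 1 + 1 = n := by omega
    rw [this]
    exact hn1
  -- B is nonnegative
  have hBnonneg : ∀ N, 0 ≤ B N := by
    intro N
    by_contra hneg
    push_neg at hneg
    obtain ⟨m, hm⟩ := hAex ((N : ℝ) / (-B N))
    set M := N + m with hM
    have hKM := hK M
    have hMm : M + 1 = (m + 1) + N := by omega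
    rw [hMm, Finset.sum_range_add] at hKM
    -- first chunk
    have hchunk1 : ∑ j ∈ Finset.range (m + 1), a j * B (M - j)
        ≤ (∑ j ∈ Finset.range (m + 1), a j) * B N := by
      rw [Finset.sum_mul]
      apply Finset.sum_le_sum
      intro j hj
      have hjm : j ≤ m := by simpa [Nat.lt_succ_iff] using hj
      have h1 : N ≤ M - j := by omega
      have h2 : B (M - j) ≤ B N := hBanti N (M - j) h1
      have := hapos j
      nlinarith
    -- second chunk
    have hchunk2 : ∑ i ∈ Finset.range N, a (m + 1 + i) * B (M - (m + 1 + i))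
        ≤ (N : ℝ) := by
      calc ∑ i ∈ Finset.range N, a (m + 1 + i) * B (M - (m + 1 + i))
          ≤ ∑ i ∈ Finset.range N, (1 : ℝ) := by
            apply Finset.sum_le_sum
            intro i hi
            have h1 := hale1 (m + 1 + i)
            have h2 := hapos (m + 1 + i)
            have h3 := hBle1 (M - (m + 1 + i))
            nlinarith
        _ = (N : ℝ) := by simp
    have hA1 : (N : ℝ) / (-B N) < ∑ i ∈ Finset.range (m + 1), a i := hm
    have hBNneg : (0:ℝ) < -B N := by linarith
    have hA2 : (N : ℝ) < (∑ i ∈ Finset.range (m + 1), a i) * (-B N) := by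
      rw [div_lt_iff₀ hBNneg] at hA1
      linarith
    nlinarith [hKM, hchunk1, hchunk2]
  -- B tends to its infimum, which is 0
  have hBbdd : BddBelow (Set.range B) := ⟨0, fun x ⟨n, hn⟩ => hn ▸ hBnonneg n⟩
  have hBanti' : Antitone B := fun i j hij => hBanti i j hij
  have hBtend : Tendsto B atTop (nhds (⨅ n, B n)) := tendsto_atTop_ciInf hBanti' hBbdd
  have hs0 : 0 ≤ ⨅ n, B n := le_ciInf hBnonneg
  have hsle : ⨅ n, B n ≤ 0 := by
    by_contra hpos
    push_neg at hpos
    set s := ⨅ n, B n with hsdef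
    obtain ⟨m, hm⟩ := hAex (1 / s)
    have hKm := hK m
    have hlow : (∑ j ∈ Finset.range (m + 1), a j) * s
        ≤ ∑ j ∈ Finset.range (m + 1), a j * B (m - j) := by
      rw [Finset.sum_mul]
      apply Finset.sum_le_sum
      intro j hj
      have h1 : s ≤ B (m - j) := ciInf_le hBbdd (m - j)
      have := hapos j
      nlinarith
    have h2 : 1 / s < ∑ i ∈ Finset.range (m + 1), a i := hm
    rw [div_lt_iff₀ hpos] at h2
    nlinarith [hKm, hlow]
  have hBzero : Tendsto B atTop (nhds 0) := by
    have : (⨅ n, B n) = 0 := le_antisymm hsle hs0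
    rwa [this] at hBtend
  -- partial sums of |b|
  have habs : ∀ n, ∑ k ∈ Finset.range (n + 1), |b k| = 2 - B n := by
    intro n
    have h1 : ∑ k ∈ Finset.range (n + 1), (|b k| + b k) = 2 := by
      rw [Finset.sum_eq_single_of_mem 0 (Finset.mem_range.mpr (by omega))]
      · rw [hb0]; norm_num
      · intro k _ hk0
        have hk1 : 1 ≤ k := by omega
        have := hbneg k hk1
        rw [abs_of_nonpos this]
        ring
    have h2 : ∑ k ∈ Finset.range (n + 1), (|b k| + b k)
        = ∑ k ∈ Finset.range (n + 1), |b k| + B n := by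
      rw [Finset.sum_add_distrib, hB]
    rw [h2] at h1
    linarith
  have hPle : ∀ n, ∑ k ∈ Finset.range n, |b k| ≤ 2 := by
    intro n
    cases n with
    | zero => simp
    | succ n =>
      rw [habs n]
      linarith [hBnonneg n]
  have hsummable : Summable fun k => |b k| :=
    summable_of_sum_range_le (fun n => abs_nonneg _) hPle
  refine ⟨hsummable, ?_⟩
  have hHasSum : HasSum (fun k => |b k|) 2 := by
    rw [hsummable.hasSum_iff_tendsto_nat]
    rw [← tendsto_add_atTop_iff_nat 1]
    have heq : (fun n => ∑ i ∈ Finset.range (n + 1), |b i|) = fun n => 2 - B n := by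
      funext n; exact habs n
    rw [heq]
    have : Tendsto (fun n => 2 - B n) atTop (nhds (2 - 0)) :=
      (tendsto_const_nhds).sub hBzero
    simpa using this
  exact hHasSum.tsum_eq
end
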